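/- arXiv:1211.1639 — 9 statements merged into one kernel-verified Lean document; each statement's English description precedes it below -/
import Mathlib

section
/- Suppose (xₙ) is generated by the algorithm and satisfies: for every subsequence (x_{kₙ}), if x_{kₙ} → x̄ strongly and x_{kₙ} - y_{kₙ} → 0, then x̄ ∈ C. Then every bounded subsequence of (xₙ) converges strongly to a point of C. -/
/-!
For `m ≥ n` we have `x m ∈ C m ⊆ C n`, and `x n` is the nearest point of the convex set `C n`
to `x₀`, so `‖x m - x n‖² ≤ ‖x₀ - x m‖² - ‖x₀ - x n‖²`. The distances `‖x₀ - x n‖` are therefore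
nondecreasing, and bounded thanks to the bounded subsequence, so the whole sequence is Cauchy.
Since `x (n + 1) ∈ H(x n, y n)`, we get `‖x n - y n‖ ≤ 2 ‖x n - x (n + 1)‖ → 0`, and the hypothesis
applied to the full sequence puts its limit in `C`.
-/

open Filter Topology

open scoped RealInnerProductSpace

section Seminormed

variable {E : Type*} [SeminormedAddCommGroup E]

theorem cauchySeq_of_norm_sub_sq_le_sub {z : ℕ → E} {a : ℕ → ℝ} (ha : BddAbove (Set.range a))
    (h : ∀ n m, n ≤ m → ‖z m - z n‖ ^ 2 ≤ a m - a n) : CauchySeq z := by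
  have ha_mono : Monotone a := fun n m hnm => by linarith [h n m hnm, sq_nonneg ‖z m - z n‖]
  have ha_cauchy := Metric.cauchySeq_iff.mp (tendsto_atTop_ciSup ha_mono ha).cauchySeq
  refine Metric.cauchySeq_iff.mpr fun ε hε => ?_
  obtain ⟨N, hN⟩ := ha_cauchy (ε ^ 2) (by positivity)
  refine ⟨N, fun m hm n hn => ?_⟩
  wlog hnm : n ≤ m generalizing m n
  · rw [dist_comm]; exact this n hn m hm (le_of_not_ge hnm)
  have hsq : ‖z m - z n‖ ^ 2 < ε ^ 2 := calc
    ‖z m - z n‖ ^ 2 ≤ a m - a n := h n m hnm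
    _ ≤ dist (a m) (a n) := (le_abs_self _).trans_eq (Real.dist_eq _ _).symm
    _ < ε ^ 2 := hN m hm n hn
  rw [dist_eq_norm]
  exact lt_of_pow_lt_pow_left₀ 2 hε.le hsq

theorem monotone_norm_sub_of_forall_norm_sub_le {K : ℕ → Set E} {u : E} {z : ℕ → E}
    (hK : Antitone K) (hz : ∀ n, z n ∈ K n)
    (hmin : ∀ n, ∀ c ∈ K n, ‖u - z n‖ ≤ ‖u - c‖) : Monotone fun n => ‖u - z n‖ :=
  fun _ m hnm => hmin _ (z m) (hK hnm (hz m))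

theorem tendsto_sub_nhds_zero_of_norm_sub_succ_le {x y : ℕ → E} {l : E}
    (hx : Tendsto x atTop (𝓝 l)) (h : ∀ n, ‖y n - x (n + 1)‖ ≤ ‖x n - x (n + 1)‖) :
    Tendsto (fun n => x n - y n) atTop (𝓝 0) := by
  have hstep : Tendsto (fun n => x n - x (n + 1)) atTop (𝓝 0) := by
    simpa using hx.sub (hx.comp (tendsto_add_atTop_nat 1))
  refine squeeze_zero_norm (fun n => ?_) (by simpa using hstep.norm.const_mul 2)
  calc ‖x n - y n‖ = ‖(x n - x (n + 1)) + (x (n + 1) - y n)‖ := by rw [sub_add_sub_cancel]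
    _ ≤ ‖x n - x (n + 1)‖ + ‖y n - x (n + 1)‖ := by
      rw [norm_sub_rev (y n)]; exact norm_add_le _ _
    _ ≤ 2 * ‖x n - x (n + 1)‖ := by linarith [h n]

end Seminormed

section InnerProductSpace

variable {F : Type*} [NormedAddCommGroup F] [InnerProductSpace ℝ F]

theorem convex_setOf_norm_sub_le_norm_sub (a b : F) :
    Convex ℝ {z : F | ‖b - z‖ ≤ ‖a - z‖} := by
  have hhalf : {z : F | ‖b - z‖ ≤ ‖a - z‖} = {z | ⟪a - b, z⟫ ≤ (‖a‖ ^ 2 - ‖b‖ ^ 2) / 2} := by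
    ext z
    rw [Set.mem_ofPred_eq, Set.mem_ofPred_eq, ← sq_le_sq₀ (norm_nonneg _) (norm_nonneg _),
      norm_sub_sq_real, norm_sub_sq_real, inner_sub_left]
    constructor <;> intro h <;> linarith
  rw [hhalf]
  exact convex_halfSpace_le (innerₛₗ ℝ (a - b)).isLinear _

theorem norm_sub_sq_le_of_forall_norm_sub_le {K : Set F} (hK : Convex ℝ K) {u v w : F}
    (hv : v ∈ K) (hmin : ∀ c ∈ K, ‖u - v‖ ≤ ‖u - c‖) (hw : w ∈ K) :
    ‖w - v‖ ^ 2 ≤ ‖u - w‖ ^ 2 - ‖u - v‖ ^ 2 := by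
  have : Nonempty K := ⟨⟨v, hv⟩⟩
  have hinf : ‖u - v‖ = ⨅ c : K, ‖u - c‖ :=
    le_antisymm (le_ciInf fun c => hmin c c.2) (ciInf_le ⟨0, Set.forall_mem_range.2 fun _ => norm_nonneg _⟩
      (⟨v, hv⟩ : K))
  have hinner := (norm_eq_iInf_iff_real_inner_le_zero hK hv).mp hinf w hw
  have hexpand := norm_sub_sq_real (u - v) (w - v)
  rw [sub_sub_sub_cancel_right] at hexpand
  linarith

variable {K : ℕ → Set F} {u : F} {z : ℕ → F}

theorem cauchySeq_of_forall_norm_sub_le_of_isBounded_comp (hK : Antitone K)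
    (hconv : ∀ n, Convex ℝ (K n)) (hz : ∀ n, z n ∈ K n)
    (hmin : ∀ n, ∀ c ∈ K n, ‖u - z n‖ ≤ ‖u - c‖) {k : ℕ → ℕ} (hk : StrictMono k)
    (hbdd : Bornology.IsBounded (Set.range fun n => z (k n))) : CauchySeq z := by
  obtain ⟨M, hM⟩ := isBounded_iff_forall_norm_le.mp hbdd
  have hdist_le : ∀ n, ‖u - z n‖ ≤ ‖u‖ + M := fun n => calc
    ‖u - z n‖ ≤ ‖u - z (k n)‖ := monotone_norm_sub_of_forall_norm_sub_le hK hz hmin hk.le_apply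
    _ ≤ ‖u‖ + ‖z (k n)‖ := norm_sub_le _ _
    _ ≤ ‖u‖ + M := by linarith [hM _ ⟨n, rfl⟩]
  refine cauchySeq_of_norm_sub_sq_le_sub (a := fun n => ‖u - z n‖ ^ 2) ⟨(‖u‖ + M) ^ 2, ?_⟩
    fun n m hnm => norm_sub_sq_le_of_forall_norm_sub_le (hconv n) (hz n) (hmin n) (hK hnm (hz m))
  rintro _ ⟨n, rfl⟩
  exact pow_le_pow_left₀ (norm_nonneg _) (hdist_le n) 2

end InnerProductSpace

theorem stmt_3_general {X : Type*} [NormedAddCommGroup X] [InnerProductSpace ℝ X]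
    [CompleteSpace X]
    (x₀ : X) (C : Set X)
    (Cn : ℕ → Set X) (x y : ℕ → X)
    (hC0 : Cn 0 = Set.univ)
    (hCrec : ∀ n, Cn (n + 1) = Cn n ∩ {z : X | ‖y n - z‖ ≤ ‖x n - z‖})
    (hx0 : x 0 = x₀)
    (hproj : ∀ n, x (n + 1) ∈ Cn (n + 1) ∧
      ∀ c ∈ Cn (n + 1), ‖x₀ - x (n + 1)‖ ≤ ‖x₀ - c‖)
    (hdemi : ∀ (k : ℕ → ℕ), StrictMono k → ∀ xbar : X,
      Tendsto (fun n => x (k n)) atTop (𝓝 xbar) →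
      Tendsto (fun n => x (k n) - y (k n)) atTop (𝓝 0) → xbar ∈ C) :
    ∀ (k : ℕ → ℕ), StrictMono k →
      Bornology.IsBounded (Set.range fun n => x (k n)) →
      ∃ c ∈ C, Tendsto (fun n => x (k n)) atTop (𝓝 c) := by
  intro k hk hbdd
  have hanti : Antitone Cn := antitone_nat_of_succ_le fun n => hCrec n ▸ Set.inter_subset_left
  have hconv : ∀ n, Convex ℝ (Cn n) := by
    intro n
    induction n with
    | zero => simpa [hC0] using convex_univ
    | succ n ih => rw [hCrec]; exact ih.inter (convex_setOf_norm_sub_le_norm_sub _ _)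
  have hmem : ∀ n, x n ∈ Cn n := by
    rintro (_ | n)
    · simp [hC0]
    · exact (hproj n).1
  have hmin : ∀ n, ∀ c ∈ Cn n, ‖x₀ - x n‖ ≤ ‖x₀ - c‖ := by
    rintro (_ | n) c hc
    · simp [hx0]
    · exact (hproj n).2 c hc
  obtain ⟨xbar, hx⟩ := cauchySeq_tendsto_of_complete
    (cauchySeq_of_forall_norm_sub_le_of_isBounded_comp hanti hconv hmem hmin hk hbdd)
  have hxy : Tendsto (fun n => x n - y n) atTop (𝓝 0) :=
    tendsto_sub_nhds_zero_of_norm_sub_succ_le hx fun n => by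
      have h := (hproj n).1
      rw [hCrec] at h
      exact h.2
  exact ⟨xbar, hdemi id strictMono_id xbar hx hxy, hx.comp hk.tendsto_atTop⟩

theorem stmt_3 {X : Type*} [NormedAddCommGroup X] [InnerProductSpace ℝ X]
    [CompleteSpace X]
    (x₀ : X) (C : Set X) (hCcl : IsClosed C) (hCcv : Convex ℝ C)
    (Cn : ℕ → Set X) (x y : ℕ → X)
    (hC0 : Cn 0 = Set.univ)
    (hCrec : ∀ n, Cn (n + 1) = Cn n ∩ {z : X | ‖y n - z‖ ≤ ‖x n - z‖})
    (hx0 : x 0 = x₀)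
    (hproj : ∀ n, x (n + 1) ∈ Cn (n + 1) ∧
      ∀ c ∈ Cn (n + 1), ‖x₀ - x (n + 1)‖ ≤ ‖x₀ - c‖)
    (hdemi : ∀ (k : ℕ → ℕ), StrictMono k → ∀ xbar : X,
      Tendsto (fun n => x (k n)) atTop (𝓝 xbar) →
      Tendsto (fun n => x (k n) - y (k n)) atTop (𝓝 0) → xbar ∈ C) :
    ∀ (k : ℕ → ℕ), StrictMono k →
      Bornology.IsBounded (Set.range fun n => x (k n)) →
      ∃ c ∈ C, Tendsto (fun n => x (k n)) atTop (𝓝 c) :=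
  stmt_3_general x₀ C Cn x y hC0 hCrec hx0 hproj hdemi
end

section
/- If a sequence (xₙ) in a Hilbert space satisfies ⟨xₙ - x_m, x₀ - x_m⟩ ≤ 0 for all m < n and ‖x₀ - xₙ‖ converges to a finite limit β, then (xₙ) is a Cauchy sequence and hence converges strongly. -/
open Filter Topology RealInnerProductSpace

theorem stmt_4 {X : Type*} [NormedAddCommGroup X] [InnerProductSpace ℝ X]
    [CompleteSpace X]
    (x₀ : X) (x : ℕ → X) (β : ℝ)
    (hker : ∀ m n : ℕ, m < n → ⟪x n - x m, x₀ - x m⟫ ≤ 0)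
    (hlim : Tendsto (fun n => ‖x₀ - x n‖) atTop (𝓝 β)) :
    CauchySeq x ∧ ∃ l : X, Tendsto x atTop (𝓝 l) := by
  have key : ∀ m n : ℕ, m < n → ‖x n - x m‖ ^ 2 ≤ ‖x₀ - x n‖ ^ 2 - ‖x₀ - x m‖ ^ 2 := by
    intro m n h
    have h1 := hker m n h
    have e1 : x n - x m = (x₀ - x m) - (x₀ - x n) := by abel
    rw [e1] at h1 ⊢
    rw [inner_sub_left, real_inner_self_eq_norm_sq] at h1
    have hn := @norm_sub_sq_real X _ _ (x₀ - x m) (x₀ - x n)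
    have hc : ⟪x₀ - x m, x₀ - x n⟫ = ⟪x₀ - x n, x₀ - x m⟫ := real_inner_comm _ _
    nlinarith [hn, h1, hc]
  have hseq : CauchySeq (fun n => ‖x₀ - x n‖ ^ 2) := (hlim.pow 2).cauchySeq
  have hC : CauchySeq x := by
    rw [Metric.cauchySeq_iff]
    intro ε hε
    obtain ⟨N, hN⟩ := Metric.cauchySeq_iff.mp hseq (ε ^ 2) (by positivity)
    refine ⟨N, fun m hm n hn => ?_⟩
    rcases lt_trichotomy m n with hmn | rfl | hmn
    · have h2 := key m n hmn
      have h3 := hN n hn m hm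
      rw [Real.dist_eq] at h3
      rw [dist_eq_norm, ← norm_neg]
      have : -(x m - x n) = x n - x m := by abel
      rw [this]
      refine lt_of_pow_lt_pow_left₀ 2 hε.le ?_
      have := abs_lt.mp h3
      linarith [this.2]
    · simpa using hε
    · have h2 := key n m hmn
      have h3 := hN m hm n hn
      rw [Real.dist_eq] at h3
      rw [dist_eq_norm]
      refine lt_of_pow_lt_pow_left₀ 2 hε.le ?_
      have := abs_lt.mp h3
      linarith [this.2]
  exact ⟨hC, cauchySeq_tendsto_of_complete hC⟩
end

section
/- (Dichotomy) Suppose (xₙ) is generated by the algorithm, C ⊆ Cₙ for all n, and for every subsequence, strong convergence x_{kₙ} → x̄ together with x_{kₙ} - y_{kₙ} → 0 implies x̄ ∈ C. Then exactly one of the following holds: (i) C ≠ ∅ and xₙ → P_C x₀ strongly; (ii) C = ∅ and ‖xₙ‖ → +∞. -/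
open Filter Topology

open RealInnerProductSpace in
private lemma halfspace_convex' {X : Type*} [NormedAddCommGroup X] [InnerProductSpace ℝ X]
    (a b : X) : Convex ℝ {z : X | ‖b - z‖ ≤ ‖a - z‖} := by
  have hset : {z : X | ‖b - z‖ ≤ ‖a - z‖}
      = {z : X | ⟪a - b, z⟫ ≤ (‖a‖^2 - ‖b‖^2)/2} := by
    ext z
    simp only [Set.mem_setOf_eq]
    rw [← pow_le_pow_iff_left₀ (norm_nonneg _) (norm_nonneg _) two_ne_zero,
      norm_sub_sq_real, norm_sub_sq_real, inner_sub_left]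
    constructor <;> intro h <;> linarith
  rw [hset]
  exact convex_halfSpace_le
    ⟨fun u v => inner_add_right _ _ _, fun c u => real_inner_smul_right _ _ _⟩ _

open RealInnerProductSpace in
theorem stmt_5 {X : Type*} [NormedAddCommGroup X] [InnerProductSpace ℝ X]
    [CompleteSpace X]
    (x₀ : X) (C : Set X) (hCcl : IsClosed C) (hCcv : Convex ℝ C)
    (Cn : ℕ → Set X) (x y : ℕ → X)
    (hC0 : Cn 0 = Set.univ)
    (hCrec : ∀ n, Cn (n + 1) = Cn n ∩ {z : X | ‖y n - z‖ ≤ ‖x n - z‖})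
    (hx0 : x 0 = x₀)
    (hproj : ∀ n, x (n + 1) ∈ Cn (n + 1) ∧
      ∀ c ∈ Cn (n + 1), ‖x₀ - x (n + 1)‖ ≤ ‖x₀ - c‖)
    (hsub : ∀ n, C ⊆ Cn n)
    (hdemi : ∀ (k : ℕ → ℕ), StrictMono k → ∀ xbar : X,
      Tendsto (fun n => x (k n)) atTop (𝓝 xbar) →
      Tendsto (fun n => x (k n) - y (k n)) atTop (𝓝 0) → xbar ∈ C) :
    (C.Nonempty ∧ ∃ p ∈ C, (∀ c ∈ C, ‖x₀ - p‖ ≤ ‖x₀ - c‖) ∧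
        Tendsto x atTop (𝓝 p)) ∨
    (C = ∅ ∧ Tendsto (fun n => ‖x n‖) atTop atTop) := by
  -- basic structure of the sets Cₙ
  have hanti : Antitone Cn := by
    refine antitone_nat_of_succ_le fun n => ?_
    rw [hCrec]; exact Set.inter_subset_left
  have hcv : ∀ n, Convex ℝ (Cn n) := by
    intro n
    induction n with
    | zero => rw [hC0]; exact convex_univ
    | succ n ih => rw [hCrec]; exact ih.inter (halfspace_convex' (x n) (y n))
  have hmem : ∀ n, x n ∈ Cn n := by
    intro n
    cases n with
    | zero => rw [hC0]; trivial
    | succ n => exact (hproj n).1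
  have hmin : ∀ n, ∀ c ∈ Cn n, ‖x₀ - x n‖ ≤ ‖x₀ - c‖ := by
    intro n
    cases n with
    | zero => intro c _; simp [hx0]
    | succ n => exact (hproj n).2
  -- the variational inequality for the projection
  have hvar : ∀ n, ∀ w ∈ Cn n, ⟪x₀ - x n, w - x n⟫ ≤ 0 := by
    intro n
    haveI : Nonempty (Cn n) := ⟨⟨x n, hmem n⟩⟩
    refine (norm_eq_iInf_iff_real_inner_le_zero (hcv n) (hmem n)).mp ?_
    refine le_antisymm (le_ciInf fun w => hmin n w w.2) ?_
    have hbb : BddBelow (Set.range fun w : Cn n => ‖x₀ - (w : X)‖) :=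
      ⟨0, by rintro r ⟨w, rfl⟩; exact norm_nonneg _⟩
    exact ciInf_le hbb ⟨x n, hmem n⟩
  -- the "firm" inequality
  have hfirm : ∀ m n, n ≤ m → ‖x m - x n‖^2 ≤ ‖x₀ - x m‖^2 - ‖x₀ - x n‖^2 := by
    intro m n hnm
    have h1 : ⟪x₀ - x n, x m - x n⟫ ≤ 0 := hvar n _ (hanti hnm (hmem m))
    have h2 : ‖(x₀ - x n) - (x m - x n)‖^2
        = ‖x₀ - x n‖^2 - 2*⟪x₀ - x n, x m - x n⟫ + ‖x m - x n‖^2 := norm_sub_sq_real _ _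
    have h3 : (x₀ - x n) - (x m - x n) = x₀ - x m := by abel
    rw [h3] at h2
    nlinarith [norm_nonneg (x m - x n)]
  set d : ℕ → ℝ := fun n => ‖x₀ - x n‖ with hd
  have hdmono : Monotone d := by
    refine monotone_nat_of_le_succ fun n => ?_
    exact hmin n _ (hanti (Nat.le_succ n) (hmem (n+1)))
  have hd0 : ∀ n, 0 ≤ d n := fun n => norm_nonneg _
  -- the key lemma: if d is bounded, then x converges to a point of C
  have key : BddAbove (Set.range d) → ∃ p ∈ C, Tendsto x atTop (𝓝 p) := by
    intro hbdd
    set L : ℝ := ⨆ n, d n with hL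
    have hdL : Tendsto d atTop (𝓝 L) := tendsto_atTop_ciSup hdmono hbdd
    have hdle : ∀ n, d n ≤ L := fun n => le_ciSup hbdd n
    have hL0 : 0 ≤ L := le_trans (hd0 0) (hdle 0)
    -- x is Cauchy
    have hcauchy : CauchySeq x := by
      refine cauchySeq_of_le_tendsto_0 (fun N => Real.sqrt (L^2 - d N ^ 2)) ?_ ?_
      · intro n m N hn hm
        wlog h : m ≤ n generalizing n m
        · rw [dist_comm]; exact this m n hm hn (le_of_not_ge h)
        have h0 : d N ^ 2 ≤ L ^ 2 := by nlinarith [hdle N, hd0 N]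
        rw [dist_eq_norm, Real.le_sqrt (norm_nonneg _) (by linarith)]
        have h1 : ‖x n - x m‖^2 ≤ d n ^ 2 - d m ^ 2 := hfirm n m h
        nlinarith [hdmono hm, hdle n, hd0 N, hd0 n]
      · have hsq : Tendsto (fun N => L^2 - d N ^ 2) atTop (𝓝 0) := by
          have h : Tendsto (fun N => L^2 - d N ^ 2) atTop (𝓝 (L^2 - L^2)) :=
            Tendsto.sub tendsto_const_nhds (hdL.pow 2)
          simpa using h
        have := hsq.sqrt
        simpa using this
    obtain ⟨p, hp⟩ := cauchySeq_tendsto_of_complete hcauchy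
    refine ⟨p, ?_, hp⟩
    -- x n - y n → 0
    have hstep : Tendsto (fun n => x n - x (n+1)) atTop (𝓝 0) := by
      have h1 : Tendsto (fun n => x (n+1)) atTop (𝓝 p) := hp.comp (tendsto_add_atTop_nat 1)
      simpa using hp.sub h1
    have hbound : ∀ n, ‖x n - y n‖ ≤ 2 * ‖x n - x (n+1)‖ := by
      intro n
      have hH : ‖y n - x (n+1)‖ ≤ ‖x n - x (n+1)‖ := by
        have h := (hproj n).1
        rw [hCrec n] at h
        exact h.2
      calc ‖x n - y n‖ = ‖(x n - x (n+1)) + (x (n+1) - y n)‖ := by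
            rw [sub_add_sub_cancel]
        _ ≤ ‖x n - x (n+1)‖ + ‖x (n+1) - y n‖ := norm_add_le _ _
        _ ≤ ‖x n - x (n+1)‖ + ‖x n - x (n+1)‖ := by
            rw [norm_sub_rev (x (n+1))]
            exact add_le_add le_rfl hH
        _ = 2 * ‖x n - x (n+1)‖ := by ring
    have hxy : Tendsto (fun n => x n - y n) atTop (𝓝 0) := by
      rw [tendsto_zero_iff_norm_tendsto_zero]
      refine squeeze_zero (fun n => norm_nonneg _) hbound ?_
      have h2 : Tendsto (fun n => ‖x n - x (n+1)‖) atTop (𝓝 0) := by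
        rw [← tendsto_zero_iff_norm_tendsto_zero]; exact hstep
      simpa using h2.const_mul 2
    exact hdemi id strictMono_id p hp hxy
  rcases C.eq_empty_or_nonempty with hCe | hCne
  · -- C empty
    right
    refine ⟨hCe, ?_⟩
    by_cases hbdd : BddAbove (Set.range d)
    · obtain ⟨p, hpC, -⟩ := key hbdd
      rw [hCe] at hpC
      exact absurd hpC (Set.notMem_empty p)
    · have hdtop : Tendsto d atTop atTop := tendsto_atTop_atTop_of_monotone' hdmono hbdd
      have hdtop2 : Tendsto (fun n => d n - ‖x₀‖) atTop atTop :=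
        hdtop.atTop_add tendsto_const_nhds
      refine tendsto_atTop_mono (fun n => ?_) hdtop2
      have h3 : d n ≤ ‖x₀‖ + ‖x n‖ := by
        simpa using norm_sub_le x₀ (x n)
      linarith
  · -- C nonempty
    left
    obtain ⟨c₀, hc₀⟩ := hCne
    have hbdd : BddAbove (Set.range d) := by
      refine ⟨‖x₀ - c₀‖, ?_⟩
      rintro r ⟨n, rfl⟩
      exact hmin n c₀ (hsub n hc₀)
    obtain ⟨p, hpC, hp⟩ := key hbdd
    refine ⟨⟨c₀, hc₀⟩, p, hpC, ?_, hp⟩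
    intro c hc
    have hlim : Tendsto d atTop (𝓝 ‖x₀ - p‖) := (tendsto_const_nhds.sub hp).norm
    exact le_of_tendsto hlim (Eventually.of_forall fun n => hmin n c (hsub n hc))
end

section
/- (Trichotomy) Let T be quasi nonexpansive and fixed-point closed, x₀ ∈ X, C₀ = X, C_{n+1} = Cₙ ∩ H(xₙ, Txₙ), x_{n+1} = P_{C_{n+1}} x₀ when C_{n+1} ≠ ∅. Then exactly one of the following holds: (i) Fix T ≠ ∅ and xₙ → P_{Fix T} x₀; (ii) Fix T = ∅ and the sequence is well defined with ‖xₙ‖ → +∞; (iii) Fix T = ∅ and C_{n+1} = ∅ for some n. -/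
open Filter Topology

/-!
The sets `C n` are convex, nested, and contain every fixed point of `T`, and `x (n + 1)` is the
nearest point of `C (n + 1)` to `x₀`. Hence `‖x₀ - x (n + 1)‖` is nondecreasing, and for `n ≤ m`
the projection inequality gives `‖x (m + 1) - x (n + 1)‖² ≤ ‖x₀ - x (m + 1)‖² - ‖x₀ - x (n + 1)‖²`.
So if these distances stay bounded the sequence is Cauchy; since `x (n + 1) ∈ H(x n, T (x n))`
forces `‖x n - T (x n)‖ ≤ 2 ‖x n - x (n + 1)‖`, its limit is a fixed point, and it is nearest to
`x₀` in `⋂ n, C n ⊇ Fix T`. A fixed point `z` bounds the distances by `‖x₀ - z‖`; without fixed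
points the sequence either breaks down or its distances from `x₀`, hence its norms, tend to `∞`.
-/

section Projection

variable {X : Type*} [NormedAddCommGroup X] [InnerProductSpace ℝ X]

theorem convex_setOf_norm_sub_le_norm_sub_s10 (x y : X) :
    Convex ℝ {z : X | ‖y - z‖ ≤ ‖x - z‖} := by
  have hhalf : {z : X | ‖y - z‖ ≤ ‖x - z‖} =
      {z | innerₛₗ ℝ (x - y) z ≤ (‖x‖ ^ 2 - ‖y‖ ^ 2) / 2} := by
    refine Set.ext fun z => ?_
    change ‖y - z‖ ≤ ‖x - z‖ ↔ innerₛₗ ℝ (x - y) z ≤ _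
    rw [innerₛₗ_apply_apply, inner_sub_left, ← sq_le_sq₀ (norm_nonneg _) (norm_nonneg _),
      norm_sub_sq_real, norm_sub_sq_real]
    constructor <;> intro h <;> linarith
  rw [hhalf]
  exact convex_halfSpace_le (innerₛₗ ℝ (x - y)).isLinear _

theorem norm_sub_sq_add_norm_sub_sq_le {K : Set X} (hK : Convex ℝ K) {u v w : X} (hu : u ∈ K)
    (hmin : ∀ c ∈ K, ‖v - u‖ ≤ ‖v - c‖) (hw : w ∈ K) :
    ‖v - u‖ ^ 2 + ‖w - u‖ ^ 2 ≤ ‖v - w‖ ^ 2 := by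
  have : Nonempty K := ⟨⟨u, hu⟩⟩
  have hinf : ‖v - u‖ = ⨅ c : K, ‖v - c‖ :=
    le_antisymm (le_ciInf fun c => hmin c c.2) <| ciInf_le (f := fun c : K => ‖v - c‖)
      ⟨0, by rintro _ ⟨c, rfl⟩; exact norm_nonneg _⟩ ⟨u, hu⟩
  have hinner := (norm_eq_iInf_iff_real_inner_le_zero hK hu).mp hinf w hw
  have hsplit : v - w = (v - u) - (w - u) := by abel
  rw [hsplit, norm_sub_sq_real (v - u) (w - u)]
  linarith

end Projection

section NestedProjections

variable {X : Type*} [NormedAddCommGroup X] {K : ℕ → Set X} {v : X} {y : ℕ → X}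

theorem monotone_norm_sub_of_antitone (hK : Antitone K) (hy : ∀ n, y n ∈ K n)
    (hmin : ∀ n, ∀ c ∈ K n, ‖v - y n‖ ≤ ‖v - c‖) : Monotone fun n => ‖v - y n‖ :=
  fun _ _ hnm => hmin _ _ (hK hnm (hy _))

theorem cauchySeq_of_antitone_of_bddAbove [InnerProductSpace ℝ X] (hK : Antitone K)
    (hconv : ∀ n, Convex ℝ (K n)) (hy : ∀ n, y n ∈ K n) (hmin : ∀ n, ∀ c ∈ K n, ‖v - y n‖ ≤ ‖v - c‖)
    (hbdd : BddAbove (Set.range fun n => ‖v - y n‖)) : CauchySeq y := by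
  set e : ℕ → ℝ := fun n => ‖v - y n‖ ^ 2
  have he_mono : Monotone e := fun _ _ hnm =>
    pow_le_pow_left₀ (norm_nonneg _) (monotone_norm_sub_of_antitone hK hy hmin hnm) 2
  have he_bdd : BddAbove (Set.range e) := by
    obtain ⟨M, hM⟩ := hbdd
    exact ⟨M ^ 2, by
      rintro _ ⟨n, rfl⟩
      exact pow_le_pow_left₀ (norm_nonneg _) (hM ⟨n, rfl⟩) 2⟩
  have he_cauchy : CauchySeq e := (tendsto_atTop_ciSup he_mono he_bdd).cauchySeq
  refine Metric.cauchySeq_iff'.2 fun ε hε => ?_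
  obtain ⟨N, hN⟩ := Metric.cauchySeq_iff'.1 he_cauchy (ε ^ 2) (by positivity)
  refine ⟨N, fun n hn => ?_⟩
  have hpyth := norm_sub_sq_add_norm_sub_sq_le (hconv N) (hy N) (hmin N) (hK hn (hy n))
  have hgap : e n - e N < ε ^ 2 := (le_abs_self _).trans_lt (hN n hn)
  rw [dist_eq_norm, ← pow_lt_pow_iff_left₀ (norm_nonneg _) hε.le two_ne_zero]
  linarith

theorem tendsto_norm_atTop_of_not_bddAbove (hK : Antitone K) (hy : ∀ n, y n ∈ K n)
    (hmin : ∀ n, ∀ c ∈ K n, ‖v - y n‖ ≤ ‖v - c‖)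
    (hbdd : ¬ BddAbove (Set.range fun n => ‖v - y n‖)) :
    Tendsto (fun n => ‖y n‖) atTop atTop := by
  have hdist := tendsto_atTop_atTop_of_monotone' (monotone_norm_sub_of_antitone hK hy hmin) hbdd
  refine tendsto_atTop_mono (fun n => ?_) (tendsto_atTop_add_const_right _ (-‖v‖) hdist)
  linarith [norm_sub_le v (y n)]

end NestedProjections

theorem tendsto_sub_map_of_norm_map_sub_succ_le {X : Type*} [NormedAddCommGroup X] {T : X → X}
    {x : ℕ → X} {a : X} (hx : Tendsto x atTop (𝓝 a))
    (hstep : ∀ n, ‖T (x n) - x (n + 1)‖ ≤ ‖x n - x (n + 1)‖) :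
    Tendsto (fun n => x n - T (x n)) atTop (𝓝 0) := by
  have hgap : Tendsto (fun n => 2 * ‖x n - x (n + 1)‖) atTop (𝓝 0) := by
    simpa using ((hx.sub ((tendsto_add_atTop_iff_nat 1).2 hx)).norm.const_mul 2)
  refine squeeze_zero_norm (fun n => ?_) hgap
  calc ‖x n - T (x n)‖ = ‖(x n - x (n + 1)) - (T (x n) - x (n + 1))‖ := by abel_nf
    _ ≤ ‖x n - x (n + 1)‖ + ‖T (x n) - x (n + 1)‖ := norm_sub_le _ _
    _ ≤ 2 * ‖x n - x (n + 1)‖ := by linarith [hstep n]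

section ShrinkingProjection

variable {X : Type*} [NormedAddCommGroup X] {T : X → X} {C : ℕ → Set X} {x : ℕ → X}

theorem antitone_of_eq_inter
    (hCrec : ∀ n, C (n + 1) = C n ∩ {z : X | ‖T (x n) - z‖ ≤ ‖x n - z‖}) : Antitone C :=
  antitone_nat_of_succ_le fun n => (hCrec n).symm ▸ Set.inter_subset_left

theorem convex_of_eq_inter [InnerProductSpace ℝ X] (hC0 : C 0 = Set.univ)
    (hCrec : ∀ n, C (n + 1) = C n ∩ {z : X | ‖T (x n) - z‖ ≤ ‖x n - z‖}) (n : ℕ) :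
    Convex ℝ (C n) := by
  induction n with
  | zero => exact hC0 ▸ convex_univ
  | succ n ih => exact (hCrec n).symm ▸ ih.inter (convex_setOf_norm_sub_le_norm_sub_s10 _ _)

theorem setOf_fixed_subset_of_eq_inter
    (hqne : ∀ x : X, ∀ y ∈ {z : X | T z = z}, ‖T x - y‖ ≤ ‖x - y‖) (hC0 : C 0 = Set.univ)
    (hCrec : ∀ n, C (n + 1) = C n ∩ {z : X | ‖T (x n) - z‖ ≤ ‖x n - z‖}) (n : ℕ) :
    {z : X | T z = z} ⊆ C n := by
  induction n with
  | zero => exact hC0 ▸ Set.subset_univ _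
  | succ n ih => exact (hCrec n).symm ▸ Set.subset_inter ih fun z hz => hqne (x n) z hz

theorem exists_fixed_tendsto_of_bddAbove [InnerProductSpace ℝ X] [CompleteSpace X]
    (hfpc : ∀ (u : ℕ → X) (xbar : X), Tendsto u atTop (𝓝 xbar) →
      Tendsto (fun n => u n - T (u n)) atTop (𝓝 0) → T xbar = xbar)
    (hC0 : C 0 = Set.univ)
    (hCrec : ∀ n, C (n + 1) = C n ∩ {z : X | ‖T (x n) - z‖ ≤ ‖x n - z‖}) {x₀ : X}
    (hproj : ∀ n, x (n + 1) ∈ C (n + 1) ∧ ∀ c ∈ C (n + 1), ‖x₀ - x (n + 1)‖ ≤ ‖x₀ - c‖)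
    (hbdd : BddAbove (Set.range fun n => ‖x₀ - x (n + 1)‖)) :
    ∃ p, T p = p ∧ Tendsto x atTop (𝓝 p) ∧ ∀ c, (∀ n, c ∈ C n) → ‖x₀ - p‖ ≤ ‖x₀ - c‖ := by
  have hK : Antitone fun n => C (n + 1) :=
    (antitone_of_eq_inter hCrec).comp_monotone (monotone_id.add_const 1)
  obtain ⟨p, hp⟩ := cauchySeq_tendsto_of_complete <| cauchySeq_of_antitone_of_bddAbove hK
    (fun n => convex_of_eq_inter hC0 hCrec (n + 1)) (fun n => (hproj n).1) (fun n => (hproj n).2)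
    hbdd
  have hx : Tendsto x atTop (𝓝 p) := (tendsto_add_atTop_iff_nat 1).1 hp
  have hstep (n : ℕ) : ‖T (x n) - x (n + 1)‖ ≤ ‖x n - x (n + 1)‖ :=
    ((hCrec n ▸ (hproj n).1) : x (n + 1) ∈ C n ∩ _).2
  refine ⟨p, hfpc x p hx (tendsto_sub_map_of_norm_map_sub_succ_le hx hstep), hx, fun c hc => ?_⟩
  exact le_of_tendsto ((tendsto_const_nhds.sub hp).norm)
    (Eventually.of_forall fun n => (hproj n).2 c (hc (n + 1)))

end ShrinkingProjection

theorem stmt_10_general {X : Type*} [NormedAddCommGroup X] [InnerProductSpace ℝ X]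
    [CompleteSpace X]
    (T : X → X)
    (hqne : ∀ x : X, ∀ y ∈ {z : X | T z = z}, ‖T x - y‖ ≤ ‖x - y‖)
    (hfpc : ∀ (u : ℕ → X) (xbar : X), Tendsto u atTop (𝓝 xbar) →
      Tendsto (fun n => u n - T (u n)) atTop (𝓝 0) → T xbar = xbar)
    (x₀ : X) (C : ℕ → Set X) (x : ℕ → X)
    (hC0 : C 0 = Set.univ)
    (hCrec : ∀ n, C (n + 1) = C n ∩ {z : X | ‖T (x n) - z‖ ≤ ‖x n - z‖})
    (hproj : ∀ n, (C (n + 1)).Nonempty →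
      x (n + 1) ∈ C (n + 1) ∧ ∀ c ∈ C (n + 1), ‖x₀ - x (n + 1)‖ ≤ ‖x₀ - c‖) :
    ({z : X | T z = z}.Nonempty ∧ ∃ p ∈ {z : X | T z = z},
        (∀ c ∈ {z : X | T z = z}, ‖x₀ - p‖ ≤ ‖x₀ - c‖) ∧
        Tendsto x atTop (𝓝 p)) ∨
    ({z : X | T z = z} = ∅ ∧ (∀ n, (C n).Nonempty) ∧
        Tendsto (fun n => ‖x n‖) atTop atTop) ∨
    ({z : X | T z = z} = ∅ ∧ ∃ n, C (n + 1) = ∅) := by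
  rcases {z : X | T z = z}.eq_empty_or_nonempty with hfix | ⟨z₀, hz₀⟩
  · by_cases hne : ∀ n, (C n).Nonempty
    · have hproj' n := hproj n (hne (n + 1))
      have hunbdd : ¬ BddAbove (Set.range fun n => ‖x₀ - x (n + 1)‖) := fun hbdd => by
        obtain ⟨p, hp, -⟩ := exists_fixed_tendsto_of_bddAbove hfpc hC0 hCrec hproj' hbdd
        exact hfix.subset hp
      have hK : Antitone fun n => C (n + 1) :=
        (antitone_of_eq_inter hCrec).comp_monotone (monotone_id.add_const 1)
      refine Or.inr (Or.inl ⟨hfix, hne, (tendsto_add_atTop_iff_nat 1).1 ?_⟩)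
      exact tendsto_norm_atTop_of_not_bddAbove hK (fun n => (hproj' n).1) (fun n => (hproj' n).2)
        hunbdd
    · simp only [not_forall, Set.not_nonempty_iff_eq_empty] at hne
      obtain ⟨_ | m, hm⟩ := hne
      · exact absurd (hC0 ▸ hm) Set.univ_nonempty.ne_empty
      · exact Or.inr (Or.inr ⟨hfix, m, hm⟩)
  · have hsub := setOf_fixed_subset_of_eq_inter hqne hC0 hCrec
    have hproj' n := hproj n ⟨z₀, hsub (n + 1) hz₀⟩
    obtain ⟨p, hp, hlim, hmin⟩ := exists_fixed_tendsto_of_bddAbove hfpc hC0 hCrec hproj'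
      ⟨‖x₀ - z₀‖, by rintro _ ⟨n, rfl⟩; exact (hproj' n).2 z₀ (hsub _ hz₀)⟩
    exact Or.inl ⟨⟨z₀, hz₀⟩, p, hp, fun c hc => hmin c fun n => hsub n hc, hlim⟩

theorem stmt_10 {X : Type*} [NormedAddCommGroup X] [InnerProductSpace ℝ X]
    [CompleteSpace X]
    (T : X → X)
    (hqne : ∀ x : X, ∀ y ∈ {z : X | T z = z}, ‖T x - y‖ ≤ ‖x - y‖)
    (hfpc : ∀ (u : ℕ → X) (xbar : X), Tendsto u atTop (𝓝 xbar) →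
      Tendsto (fun n => u n - T (u n)) atTop (𝓝 0) → T xbar = xbar)
    (x₀ : X) (C : ℕ → Set X) (x : ℕ → X)
    (hC0 : C 0 = Set.univ)
    (hCrec : ∀ n, C (n + 1) = C n ∩ {z : X | ‖T (x n) - z‖ ≤ ‖x n - z‖})
    (hx0 : x 0 = x₀)
    (hproj : ∀ n, (C (n + 1)).Nonempty →
      x (n + 1) ∈ C (n + 1) ∧ ∀ c ∈ C (n + 1), ‖x₀ - x (n + 1)‖ ≤ ‖x₀ - c‖) :
    ({z : X | T z = z}.Nonempty ∧ ∃ p ∈ {z : X | T z = z},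
        (∀ c ∈ {z : X | T z = z}, ‖x₀ - p‖ ≤ ‖x₀ - c‖) ∧
        Tendsto x atTop (𝓝 p)) ∨
    ({z : X | T z = z} = ∅ ∧ (∀ n, (C n).Nonempty) ∧
        Tendsto (fun n => ‖x n‖) atTop atTop) ∨
    ({z : X | T z = z} = ∅ ∧ ∃ n, C (n + 1) = ∅) :=
  stmt_10_general T hqne hfpc x₀ C x hC0 hCrec hproj
end

section
/- If Fix T ≠ ∅ and T is quasi nonexpansive, then the sets Cₙ of the algorithm (C₀ = X, C_{n+1} = Cₙ ∩ H(xₙ, Txₙ), x_{n+1} = P_{C_{n+1}} x₀) all contain Fix T; in particular the sequence (xₙ) is well defined. -/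
theorem stmt_11_general {X : Type*} [NormedAddCommGroup X]
    (T : X → X)
    (hqne : ∀ x : X, ∀ y ∈ {z : X | T z = z}, ‖T x - y‖ ≤ ‖x - y‖)
    (hfix : {z : X | T z = z}.Nonempty)
    (C : ℕ → Set X) (x : ℕ → X)
    (hC0 : C 0 = Set.univ)
    (hCrec : ∀ n, C (n + 1) = C n ∩ {z : X | ‖T (x n) - z‖ ≤ ‖x n - z‖}) :
    ∀ n, {z : X | T z = z} ⊆ C n ∧ (C n).Nonempty := by
  have fix_subset : ∀ n, {z : X | T z = z} ⊆ C n := by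
    intro n
    induction n with
    | zero => simp [hC0]
    | succ k ih =>
      rw [hCrec k]
      exact fun z hz => ⟨ih hz, hqne (x k) z hz⟩
  exact fun n => ⟨fix_subset n, hfix.mono (fix_subset n)⟩

theorem stmt_11 {X : Type*} [NormedAddCommGroup X] [InnerProductSpace ℝ X]
    (T : X → X)
    (hqne : ∀ x : X, ∀ y ∈ {z : X | T z = z}, ‖T x - y‖ ≤ ‖x - y‖)
    (hfix : {z : X | T z = z}.Nonempty)
    (x₀ : X) (C : ℕ → Set X) (x : ℕ → X)
    (hC0 : C 0 = Set.univ)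
    (hCrec : ∀ n, C (n + 1) = C n ∩ {z : X | ‖T (x n) - z‖ ≤ ‖x n - z‖})
    (hx0 : x 0 = x₀)
    (hproj : ∀ n, (C (n + 1)).Nonempty →
      x (n + 1) ∈ C (n + 1) ∧ ∀ c ∈ C (n + 1), ‖x₀ - x (n + 1)‖ ≤ ‖x₀ - c‖) :
    ∀ n, {z : X | T z = z} ⊆ C n ∧ (C n).Nonempty :=
  stmt_11_general T hqne hfix C x hC0 hCrec
end

section
/- Let X = ℝ and T : x ↦ x + α with α > 0. Then T is nonexpansive with Fix T = ∅, the algorithm C₀ = ℝ, C_{n+1} = Cₙ ∩ H(xₙ, Txₙ), x_{n+1} = P_{C_{n+1}} x₀ yields xₙ = x₀ + nα/2, and |xₙ| → +∞. -/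
open Filter Topology

theorem abs_sub_le_abs_sub_iff_midpoint_le {a b z : ℝ} (hab : a < b) :
    |b - z| ≤ |a - z| ↔ (a + b) / 2 ≤ z := by
  rw [← sq_le_sq]
  constructor <;> intro h <;> nlinarith

theorem setOf_abs_sub_le_abs_sub_eq_Ici {a b : ℝ} (hab : a < b) :
    {z : ℝ | |b - z| ≤ |a - z|} = Set.Ici ((a + b) / 2) :=
  Set.ext fun _ => abs_sub_le_abs_sub_iff_midpoint_le hab

theorem eq_of_abs_sub_le_of_le_of_le {x₀ c p : ℝ} (hx₀ : x₀ ≤ c) (hcp : c ≤ p)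
    (hmin : |x₀ - p| ≤ |x₀ - c|) : p = c := by
  rw [abs_of_nonpos (by linarith), abs_of_nonpos (by linarith)] at hmin
  linarith

/-- The invariant `Set.Ici (x n) ⊆ C n` makes the intersection with `C n` irrelevant:
`C (n + 1)` is the half-line `[x n + α / 2, ∞)`, whose closest point to `x₀` is its endpoint. -/
theorem projectionIterates_eq_and_Ici_subset (α : ℝ) (hα : 0 < α) (x₀ : ℝ) (C : ℕ → Set ℝ)
    (x : ℕ → ℝ) (hC0 : C 0 = Set.univ)
    (hCrec : ∀ n, C (n + 1) = C n ∩ {z : ℝ | |(x n + α) - z| ≤ |x n - z|})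
    (hx0 : x 0 = x₀)
    (hproj : ∀ n, x (n + 1) ∈ C (n + 1) ∧
      ∀ c ∈ C (n + 1), |x₀ - x (n + 1)| ≤ |x₀ - c|) (n : ℕ) :
    x n = x₀ + n * α / 2 ∧ Set.Ici (x n) ⊆ C n := by
  induction n with
  | zero => simp [hx0, hC0]
  | succ n ih =>
    obtain ⟨hxn, hCn⟩ := ih
    have hmid : (x n + (x n + α)) / 2 = x n + α / 2 := by ring
    have hC : C (n + 1) = Set.Ici (x n + α / 2) := by
      rw [hCrec, setOf_abs_sub_le_abs_sub_eq_Ici (by linarith), hmid]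
      exact Set.inter_eq_right.2 (subset_trans (Set.Ici_subset_Ici.2 (by linarith)) hCn)
    obtain ⟨hmem, hmin⟩ := hproj n
    rw [hC] at hmem hmin
    have hx : x (n + 1) = x n + α / 2 :=
      eq_of_abs_sub_le_of_le_of_le (by nlinarith [n.cast_nonneg (α := ℝ)]) hmem
        (hmin _ Set.self_mem_Ici)
    exact ⟨by rw [hx, hxn]; push_cast; ring, by rw [hC, hx]⟩

theorem stmt_13 (α : ℝ) (hα : 0 < α)
    (x₀ : ℝ) (C : ℕ → Set ℝ) (x : ℕ → ℝ)
    (hC0 : C 0 = Set.univ)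
    (hCrec : ∀ n, C (n + 1) = C n ∩ {z : ℝ | |(x n + α) - z| ≤ |x n - z|})
    (hx0 : x 0 = x₀)
    (hproj : ∀ n, x (n + 1) ∈ C (n + 1) ∧
      ∀ c ∈ C (n + 1), |x₀ - x (n + 1)| ≤ |x₀ - c|) :
    (∀ a b : ℝ, |(a + α) - (b + α)| ≤ |a - b|) ∧
    {z : ℝ | z + α = z} = ∅ ∧
    (∀ n, x n = x₀ + n * α / 2) ∧
    Tendsto (fun n => |x n|) atTop atTop := by
  have hx : ∀ n, x n = x₀ + n * α / 2 := fun n =>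
    (projectionIterates_eq_and_Ici_subset α hα x₀ C x hC0 hCrec hx0 hproj n).1
  refine ⟨fun a b => by rw [add_sub_add_right_eq_sub], ?_, hx, ?_⟩
  · exact Set.eq_empty_of_forall_notMem fun z hz => by
      exact hα.ne' (add_eq_left.1 hz)
  · have hlin : Tendsto (fun n : ℕ => x₀ + n * α / 2) atTop atTop :=
      tendsto_atTop_add_const_left _ _
        ((tendsto_natCast_atTop_atTop.atTop_mul_const hα).atTop_div_const two_pos)
    rw [funext hx]
    exact tendsto_abs_atTop_atTop.comp hlin
end

section
/- The subgradient projector T of f is fixed-point closed: if xₙ → x̄ strongly and xₙ − Txₙ → 0, then x̄ ∈ Fix T (equivalently x̄ = 0). -/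
/-! Testing the subgradient inequality at `x` against `y = x + (x - T x)` gives
`⟪g x, x - T x⟫ ≤ f (2x - T x) - f x`, and the left side is exactly `f x` by the choice of the
step length. Passing to the limit along `xₙ → x̄` with `xₙ - T xₙ → 0` and using continuity of `f`
yields `2 f x̄ ≤ f x̄`, so `f x̄ ≤ 0` and `x̄ = 0`. -/

open scoped Classical
open Filter Topology RealInnerProductSpace

section Subgradient

variable {X : Type*} [NormedAddCommGroup X] [InnerProductSpace ℝ X]

theorem inner_div_norm_sq_smul_self (a : ℝ) {v : X} (hv : v ≠ 0) :
    ⟪v, (a / ‖v‖ ^ 2) • v⟫ = a := by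
  have : ‖v‖ ^ 2 ≠ 0 := pow_ne_zero 2 (norm_ne_zero_iff.mpr hv)
  rw [inner_smul_right, real_inner_self_eq_norm_sq]
  field_simp

variable {f : X → ℝ} {g : X → X}

theorem le_of_subgradient_eq_zero (hsub : ∀ x y : X, ⟪g x, y - x⟫ ≤ f y - f x) {x : X}
    (hg : g x = 0) (y : X) : f x ≤ f y := by
  have := hsub x y
  rw [hg, inner_zero_left] at this
  linarith

theorem nonpos_of_tendsto_of_le_inner (hsub : ∀ x y : X, ⟪g x, y - x⟫ ≤ f y - f x)
    {xbar : X} (hcont : ContinuousAt f xbar) {u d : ℕ → X} (hu : Tendsto u atTop (𝓝 xbar))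
    (hd : Tendsto d atTop (𝓝 0)) (hle : ∀ n, f (u n) ≤ ⟪g (u n), d n⟫) : f xbar ≤ 0 := by
  have hstep : ∀ n, f (u n) + f (u n) ≤ f (u n + d n) := fun n => by
    have := hsub (u n) (u n + d n)
    rw [add_sub_cancel_left] at this
    linarith [hle n]
  have hud : Tendsto (fun n => u n + d n) atTop (𝓝 xbar) := by
    simpa using hu.add hd
  have hfu := hcont.tendsto.comp hu
  have hlim : f xbar + f xbar ≤ f xbar :=
    le_of_tendsto_of_tendsto' (hfu.add hfu) (hcont.tendsto.comp hud) hstep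
  linarith

end Subgradient

theorem stmt_16_general {X : Type*} [NormedAddCommGroup X] [InnerProductSpace ℝ X]
    (f : X → ℝ) (g : X → X) (T : X → X)
    (hcont : Continuous f)
    (hlev : {x : X | f x ≤ 0} = {0})
    (hsubgrad : ∀ x y : X, ⟪g x, y - x⟫ ≤ f y - f x)
    (hT : ∀ x : X, T x = if x = 0 then x else x - (f x / ‖g x‖ ^ 2) • g x) :
    ∀ (u : ℕ → X) (xbar : X), Tendsto u atTop (𝓝 xbar) →
      Tendsto (fun n => u n - T (u n)) atTop (𝓝 0) →
      T xbar = xbar ∧ xbar = 0 := by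
  intro u xbar hu hd
  have hzero : ∀ x, f x ≤ 0 ↔ x = 0 := fun x => Set.ext_iff.mp hlev x
  have hf0 : f 0 ≤ 0 := (hzero 0).mpr rfl
  have hle_inner : ∀ x, f x ≤ ⟪g x, x - T x⟫ := by
    intro x
    by_cases hx : x = 0
    · simpa [hT, hx] using hf0
    · have hg : g x ≠ 0 := fun hg =>
        hx ((hzero x).mp ((le_of_subgradient_eq_zero hsubgrad hg 0).trans hf0))
      rw [hT, if_neg hx, sub_sub_cancel, inner_div_norm_sq_smul_self _ hg]
  have hx0 : xbar = 0 := (hzero xbar).mp <|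
    nonpos_of_tendsto_of_le_inner hsubgrad hcont.continuousAt hu hd fun n => hle_inner (u n)
  exact ⟨by rw [hT, if_pos hx0], hx0⟩

theorem stmt_16 {X : Type*} [NormedAddCommGroup X] [InnerProductSpace ℝ X]
    (f : X → ℝ) (g : X → X) (T : X → X)
    (hconv : ConvexOn ℝ Set.univ f) (hcont : Continuous f)
    (hpos : ∀ x, 0 ≤ f x) (hlev : {x : X | f x ≤ 0} = {0})
    (hsubgrad : ∀ x y : X, ⟪g x, y - x⟫ ≤ f y - f x)
    (hsw : ∀ (u : ℕ → X) (xbar : X), Tendsto u atTop (𝓝 xbar) →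
      ∀ v : X, Tendsto (fun n => ⟪g (u n), v⟫) atTop (𝓝 ⟪g xbar, v⟫))
    (hT : ∀ x : X, T x = if x = 0 then x else x - (f x / ‖g x‖ ^ 2) • g x) :
    ∀ (u : ℕ → X) (xbar : X), Tendsto u atTop (𝓝 xbar) →
      Tendsto (fun n => u n - T (u n)) atTop (𝓝 0) →
      T xbar = xbar ∧ xbar = 0 :=
  stmt_16_general f g T hcont hlev hsubgrad hT
end

section
/- The function f : ℓ² → ℝ, f((xₙ)_{n≥1}) = Σ_{n≥1} n xₙ^{2n}, is well defined, convex, nonnegative, with {x : f(x) ≤ 0} = {0}, and is Gâteaux differentiable with ∇f(x) = (2n² xₙ^{2n−1})_{n≥1}. -/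
/-!
Membership in ℓ² forces `xₙ → 0`, so the polynomial weights `(n + 1)ᵏ` are eventually
beaten by `|xₙ|ⁿ` and every series involved is dominated by `∑ xₙ²`. Convexity holds termwise
(even powers), and the directional derivative comes from differentiating the series termwise
for `|t| < 1`, where the derivatives are dominated in the same way by `(|xₙ| + |vₙ|)²`.
-/

open Filter Topology RealInnerProductSpace

theorem memℓp_two_iff_summable_sq {α : Type*} {f : α → ℝ} :
    Memℓp f 2 ↔ Summable fun i => f i ^ 2 := by
  simp [memℓp_gen_iff]

theorem eventually_natCast_add_one_pow_mul_abs_pow_le_one {a : ℕ → ℝ}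
    (ha : Tendsto a atTop (𝓝 0)) (k : ℕ) :
    ∀ᶠ n : ℕ in atTop, ((n : ℝ) + 1) ^ k * |a n| ^ n ≤ 1 := by
  have habs : Tendsto (fun n => |a n|) atTop (𝓝 0) :=
    (continuous_abs.tendsto' 0 0 abs_zero).comp ha
  filter_upwards [habs.eventually (eventually_le_nhds (by positivity : (0 : ℝ) < (2 ^ k)⁻¹))]
    with n hn
  calc ((n : ℝ) + 1) ^ k * |a n| ^ n ≤ ((2 : ℝ) ^ n) ^ k * ((2 ^ k)⁻¹) ^ n := by
        gcongr
        exact_mod_cast Nat.lt_two_pow_self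
    _ = 1 := by
        rw [← pow_mul, mul_comm n k, pow_mul, ← mul_pow, mul_inv_cancel₀ (by positivity),
          one_pow]

theorem summable_natCast_add_one_pow_mul_abs_pow_mul_sq {a : ℕ → ℝ}
    (ha : Summable fun n => a n ^ 2) (k : ℕ) {m : ℕ} (hm : m ≠ 0) :
    Summable fun n : ℕ => ((n : ℝ) + 1) ^ k * |a n| ^ (m * n) * a n ^ 2 := by
  have hlim : Tendsto (fun n => |a n| ^ m) atTop (𝓝 0) := by
    have h := (Real.continuous_sqrt.tendsto' 0 0 Real.sqrt_zero).comp ha.tendsto_atTop_zero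
    simpa [Function.comp_def, Real.sqrt_sq_eq_abs, zero_pow hm] using h.pow m
  refine ha.of_norm_bounded_eventually_nat ?_
  filter_upwards [eventually_natCast_add_one_pow_mul_abs_pow_le_one hlim k] with n hn
  rw [abs_pow, abs_abs, ← pow_mul] at hn
  rw [Real.norm_eq_abs, abs_of_nonneg (by positivity)]
  exact mul_le_of_le_one_left (sq_nonneg _) hn

theorem ConvexOn.tsum {ι E : Type*} [AddCommGroup E] [Module ℝ E] {s : Set E}
    {φ : ι → E → ℝ} (hs : Convex ℝ s) (hφ : ∀ i, ConvexOn ℝ s (φ i))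
    (hsum : ∀ x ∈ s, Summable fun i => φ i x) : ConvexOn ℝ s fun x => ∑' i, φ i x := by
  refine ⟨hs, fun x hx y hy a b ha hb hab => ?_⟩
  have hx' := (hsum x hx).mul_left a
  have hy' := (hsum y hy).mul_left b
  calc ∑' i, φ i (a • x + b • y) ≤ ∑' i, (a * φ i x + b * φ i y) :=
        Summable.tsum_le_tsum (fun i => (hφ i).2 hx hy ha hb hab) (hsum _ (hs hx hy ha hb hab))
          (hx'.add hy')
    _ = a • ∑' i, φ i x + b • ∑' i, φ i y := by
        rw [hx'.tsum_add hy', tsum_mul_left, tsum_mul_left, smul_eq_mul, smul_eq_mul]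

notation "ℓ²" => lp (fun _ : ℕ => ℝ) 2

theorem lp.summable_sq {α : Type*} (x : lp (fun _ : α => ℝ) 2) :
    Summable fun i => x i ^ 2 :=
  memℓp_two_iff_summable_sq.1 x.2

noncomputable def evenPowSum (x : ℓ²) : ℝ :=
  ∑' n : ℕ, ((n : ℝ) + 1) * x n ^ (2 * (n + 1))

theorem evenPowSum_term_nonneg (x : ℓ²) (n : ℕ) :
    0 ≤ ((n : ℝ) + 1) * x n ^ (2 * (n + 1)) :=
  mul_nonneg (by positivity) ((even_two_mul _).pow_nonneg _)

theorem summable_evenPowSum (x : ℓ²) :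
    Summable fun n : ℕ => ((n : ℝ) + 1) * x n ^ (2 * (n + 1)) := by
  refine (summable_natCast_add_one_pow_mul_abs_pow_mul_sq (lp.summable_sq x) 1
    two_ne_zero).of_norm_bounded fun n => le_of_eq ?_
  rw [Real.norm_eq_abs, abs_of_nonneg (evenPowSum_term_nonneg x n), (even_two_mul n).pow_abs]
  ring

theorem evenPowSum_nonneg (x : ℓ²) : 0 ≤ evenPowSum x :=
  tsum_nonneg (evenPowSum_term_nonneg x)

theorem evenPowSum_pos {x : ℓ²} (hx : x ≠ 0) : 0 < evenPowSum x := by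
  obtain ⟨n, hn⟩ : ∃ n, x n ≠ 0 := by
    by_contra! h
    exact hx (lp.ext (funext h))
  exact (summable_evenPowSum x).tsum_pos (evenPowSum_term_nonneg x) n
    (mul_pos (by positivity) ((even_two_mul _).pow_pos hn))

theorem convexOn_evenPowSum : ConvexOn ℝ Set.univ evenPowSum :=
  ConvexOn.tsum convex_univ
    (fun n => (((even_two_mul (n + 1)).convexOn_pow (𝕜 := ℝ)).comp_linearMap
      (lp.evalₗ (fun _ : ℕ => ℝ) 2 n)).smul (by positivity : (0 : ℝ) ≤ n + 1))
    fun x _ => summable_evenPowSum x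

theorem memℓp_evenPowSumGrad (x : ℓ²) :
    Memℓp (fun n : ℕ => 2 * ((n : ℝ) + 1) ^ 2 * x n ^ (2 * (n + 1) - 1)) 2 := by
  refine memℓp_two_iff_summable_sq.2 (((summable_natCast_add_one_pow_mul_abs_pow_mul_sq
    (lp.summable_sq x) 4 four_ne_zero).mul_left 4).congr fun n => ?_)
  rw [show 2 * (n + 1) - 1 = 2 * n + 1 by omega, show 4 * n = 2 * (2 * n) by ring,
    (even_two_mul _).pow_abs]
  ring

noncomputable def evenPowSumGrad (x : ℓ²) : ℓ² := ⟨_, memℓp_evenPowSumGrad x⟩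

theorem inner_evenPowSumGrad (x v : ℓ²) :
    ⟪evenPowSumGrad x, v⟫ =
      ∑' n : ℕ, ((n : ℝ) + 1) *
        (((2 * (n + 1) : ℕ) : ℝ) * x n ^ (2 * (n + 1) - 1) * v n) := by
  rw [lp.inner_eq_tsum]
  refine tsum_congr fun n => ?_
  simp only [evenPowSumGrad, Real.inner_apply]
  push_cast
  ring

theorem hasDerivAt_evenPowSum_add_smul (x v : ℓ²) :
    HasDerivAt (fun t : ℝ => evenPowSum (x + t • v)) ⟪evenPowSumGrad x, v⟫ 0 := by
  set g' : ℕ → ℝ → ℝ := fun n t =>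
    ((n : ℝ) + 1) * (((2 * (n + 1) : ℕ) : ℝ) * (x n + t * v n) ^ (2 * (n + 1) - 1) * v n)
  have hderiv (n : ℕ) (t : ℝ) :
      HasDerivAt (fun s => ((n : ℝ) + 1) * (x n + s * v n) ^ (2 * (n + 1))) (g' n t) t := by
    simpa using
      ((((hasDerivAt_id t).mul_const (v n)).const_add (x n)).pow _).const_mul ((n : ℝ) + 1)
  set b : ℕ → ℝ := fun n => |x n| + |v n|
  have hb : Summable fun n => b n ^ 2 :=
    .of_nonneg_of_le (fun n => sq_nonneg _)
      (fun n => by nlinarith [sq_abs (x n), sq_abs (v n), sq_nonneg (|x n| - |v n|)])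
      (((lp.summable_sq x).add (lp.summable_sq v)).mul_left 2)
  have hbound (n : ℕ) (t : ℝ) (ht : t ∈ Set.Ioo (-1) 1) :
      ‖g' n t‖ ≤ 2 * (((n : ℝ) + 1) ^ 2 * |b n| ^ (2 * n) * b n ^ 2) := by
    have hbn : 0 ≤ b n := by positivity
    have hv : |v n| ≤ b n := le_add_of_nonneg_left (abs_nonneg _)
    have hy : |x n + t * v n| ≤ b n := by
      refine (abs_add_le _ _).trans (add_le_add_right ?_ _)
      rw [abs_mul]
      exact mul_le_of_le_one_left (abs_nonneg _) (abs_le.2 ⟨ht.1.le, ht.2.le⟩)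
    simp only [g', norm_mul, norm_pow, Real.norm_eq_abs, Nat.abs_cast, abs_of_nonneg hbn]
    rw [show 2 * (n + 1) - 1 = 2 * n + 1 by omega,
      abs_of_nonneg (by positivity : (0 : ℝ) ≤ n + 1)]
    calc ((n : ℝ) + 1) * (((2 * (n + 1) : ℕ) : ℝ) * |x n + t * v n| ^ (2 * n + 1) * |v n|)
        ≤ ((n : ℝ) + 1) * (((2 * (n + 1) : ℕ) : ℝ) * b n ^ (2 * n + 1) * b n) := by gcongr
      _ = 2 * (((n : ℝ) + 1) ^ 2 * b n ^ (2 * n) * b n ^ 2) := by push_cast; ring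
  have hzero : (0 : ℝ) ∈ Set.Ioo (-1) 1 := by norm_num
  have h := hasDerivAt_tsum_of_isPreconnected
    ((summable_natCast_add_one_pow_mul_abs_pow_mul_sq hb 2 two_ne_zero).mul_left 2)
    isOpen_Ioo isPreconnected_Ioo (fun n t _ => hderiv n t) hbound hzero
    (by simpa using summable_evenPowSum x) hzero
  simp only [g', zero_mul, add_zero] at h
  rw [inner_evenPowSumGrad]
  exact h

theorem stmt_18 (f : lp (fun _ : ℕ => ℝ) 2 → ℝ)
    (hf : ∀ x : lp (fun _ : ℕ => ℝ) 2,
      f x = ∑' n : ℕ, ((n : ℝ) + 1) * (x n) ^ (2 * (n + 1))) :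
    (∀ x : lp (fun _ : ℕ => ℝ) 2,
      Summable (fun n : ℕ => ((n : ℝ) + 1) * (x n) ^ (2 * (n + 1)))) ∧
    ConvexOn ℝ Set.univ f ∧
    (∀ x, 0 ≤ f x) ∧
    {x : lp (fun _ : ℕ => ℝ) 2 | f x ≤ 0} = {0} ∧
    (∀ x : lp (fun _ : ℕ => ℝ) 2, ∃ g : lp (fun _ : ℕ => ℝ) 2,
      (∀ n : ℕ, g n = 2 * ((n : ℝ) + 1) ^ 2 * (x n) ^ (2 * (n + 1) - 1)) ∧
      ∀ v : lp (fun _ : ℕ => ℝ) 2,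
        Tendsto (fun t : ℝ => (f (x + t • v) - f x) / t) (𝓝[≠] 0)
          (𝓝 ⟪g, v⟫)) := by
  obtain rfl : f = evenPowSum := funext hf
  refine ⟨summable_evenPowSum, convexOn_evenPowSum, evenPowSum_nonneg, ?_,
    fun x => ⟨evenPowSumGrad x, fun n => rfl, fun v => ?_⟩⟩
  · ext x
    refine ⟨fun hx => by_contra fun hne => (evenPowSum_pos hne).not_ge hx, fun hx => ?_⟩
    simp [Set.mem_singleton_iff.1 hx, evenPowSum]
  · simpa [div_eq_inv_mul] using (hasDerivAt_evenPowSum_add_smul x v).tendsto_slope_zero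
end

section
/- For f : ℓ² → ℝ, f(x) = Σ n xₙ^{2n}, with subgradient projector T, the sequence xₙ := e₁ + eₙ (standard unit vectors) satisfies xₙ ⇀ e₁ weakly, f(xₙ) = 1 + n, ‖∇f(xₙ)‖ = √(4 + 4n⁴), hence xₙ − T(xₙ) → 0 strongly while e₁ ∉ Fix T; therefore Id − T is not demiclosed at 0. -/
/-!
The vectors `e₀ + eₙ₊₁` converge weakly to `e₀` because the coordinates of every vector of `ℓ²`
tend to `0`. At `e₀ + eₙ₊₁` the subgradient step `x - T x` has length
`|f x| / ‖∇f x‖ = (n + 3) / √(4 + 4 (n + 2)⁴)`, which tends to `0`: the gradient grows like the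
square of the weight `n + 2` of the moving coordinate, `f` only linearly. Yet `f e₀ = 1` and
`∇f e₀ = 2 e₀` are nonzero, so `T` moves `e₀`.
-/

open Filter Topology RealInnerProductSpace
open scoped Classical lp

theorem lp.tendsto_norm_apply_cofinite_zero {ι : Type*} {E : ι → Type*}
    [∀ i, NormedAddCommGroup (E i)] {p : ENNReal} (hp : 0 < p.toReal) (v : lp E p) :
    Tendsto (fun i => ‖v i‖) cofinite (𝓝 0) := by
  have hsum := ((lp.memℓp v).summable hp).tendsto_cofinite_zero
  have hroot : ContinuousAt (fun t : ℝ => t ^ p.toReal⁻¹) 0 :=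
    Real.continuousAt_rpow_const _ _ (Or.inr (inv_nonneg.2 hp.le))
  have := hroot.tendsto.comp hsum
  rw [Real.zero_rpow (inv_ne_zero hp.ne')] at this
  refine this.congr fun i => ?_
  simp [Function.comp, Real.rpow_rpow_inv (norm_nonneg _) hp.ne']

section

variable {ι : Type*} [DecidableEq ι]

theorem lp.tendsto_inner_single_cofinite_zero (v : ℓ²(ι, ℝ)) :
    Tendsto (fun i => ⟪lp.single 2 i (1 : ℝ), v⟫) cofinite (𝓝 0) := by
  have := lp.tendsto_norm_apply_cofinite_zero (p := 2) (by norm_num) v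
  simpa [lp.inner_single_left] using tendsto_zero_iff_norm_tendsto_zero.2 this

theorem lp.norm_smul_single_add_smul_single {i j : ι} (hij : i ≠ j) (a b : ℝ) :
    ‖(a • lp.single 2 i (1 : ℝ) + b • lp.single 2 j (1 : ℝ) : ℓ²(ι, ℝ))‖ =
      √(a ^ 2 + b ^ 2) := by
  have horth : ⟪(a • lp.single 2 i (1 : ℝ) : ℓ²(ι, ℝ)), b • lp.single 2 j 1⟫ = 0 := by
    simp [real_inner_smul_left, lp.inner_single_left, hij]
  rw [norm_add_eq_sqrt_iff_real_inner_eq_zero.2 horth]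
  simp [norm_smul, lp.norm_single, sq]

theorem lp.tsum_mul_pow_single (w : ι → ℝ) {p : ι → ℕ} (hp : ∀ k, p k ≠ 0) (i : ι) :
    ∑' k, w k * (lp.single 2 i (1 : ℝ) : ℓ²(ι, ℝ)) k ^ p k = w i := by
  rw [tsum_eq_single i fun k hk => by simp [hk, hp k]]
  simp

theorem lp.single_add_single_apply_pow {i j : ι} (hij : i ≠ j) {n : ℕ} (hn : n ≠ 0) (k : ι) :
    (lp.single 2 i (1 : ℝ) + lp.single 2 j 1 : ℓ²(ι, ℝ)) k ^ n =
      (lp.single 2 i (1 : ℝ) + lp.single 2 j 1 : ℓ²(ι, ℝ)) k := by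
  by_cases hi : k = i
  · subst hi; simp [hij]
  by_cases hj : k = j
  · subst hj; simp [hi]
  simp [hi, hj, hn]

theorem lp.tsum_mul_pow_single_add_single {i j : ι} (hij : i ≠ j) (w : ι → ℝ) {p : ι → ℕ}
    (hp : ∀ k, p k ≠ 0) :
    ∑' k, w k * (lp.single 2 i (1 : ℝ) + lp.single 2 j 1 : ℓ²(ι, ℝ)) k ^ p k =
      w i + w j := by
  rw [tsum_eq_sum (s := {i, j}) fun k hk => ?_, Finset.sum_pair hij]
  · simp [hij, hij.symm]
  · simp only [Finset.mem_insert, Finset.mem_singleton, not_or] at hk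
    simp [hk.1, hk.2, hp]

theorem lp.eq_smul_single_add_smul_single {i j : ι} (hij : i ≠ j) (c : ι → ℝ) {p : ι → ℕ}
    (hp : ∀ k, p k ≠ 0) (y : ℓ²(ι, ℝ))
    (hy : ∀ k, y k = c k * (lp.single 2 i (1 : ℝ) + lp.single 2 j 1 : ℓ²(ι, ℝ)) k ^ p k) :
    y = c i • lp.single 2 i (1 : ℝ) + c j • lp.single 2 j 1 := by
  ext k
  rw [hy, lp.single_add_single_apply_pow hij (hp _)]
  simp only [lp.coeFn_add, lp.coeFn_smul, lp.coeFn_single, Pi.add_apply, Pi.smul_apply,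
    smul_eq_mul]
  by_cases hi : k = i
  · subst hi; simp [hij]
  by_cases hj : k = j
  · subst hj; simp [hi]
  simp [hi, hj]

end

theorem norm_div_norm_sq_smul {E : Type*} [NormedAddCommGroup E] [NormedSpace ℝ E]
    (a : ℝ) (v : E) :
    ‖(a / ‖v‖ ^ 2) • v‖ = |a| / ‖v‖ := by
  rcases eq_or_ne v 0 with rfl | hv
  · simp
  have : ‖v‖ ≠ 0 := norm_ne_zero_iff.2 hv
  rw [norm_smul, norm_div, norm_pow, Real.norm_eq_abs, norm_norm]
  field_simp

theorem tendsto_add_three_div_sqrt_atTop_zero :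
    Tendsto (fun n : ℕ => ((n : ℝ) + 3) / √(4 + 4 * ((n : ℝ) + 2) ^ 4)) atTop (𝓝 0) := by
  refine squeeze_zero (fun n => by positivity) (fun n => ?_)
    tendsto_one_div_add_atTop_nhds_zero_nat
  have hsqrt : 2 * ((n : ℝ) + 2) ^ 2 ≤ √(4 + 4 * ((n : ℝ) + 2) ^ 4) :=
    Real.le_sqrt_of_sq_le (by nlinarith)
  calc ((n : ℝ) + 3) / √(4 + 4 * ((n : ℝ) + 2) ^ 4)
      ≤ ((n : ℝ) + 3) / (2 * ((n : ℝ) + 2) ^ 2) := by gcongr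
    _ ≤ 1 / ((n : ℝ) + 1) := by
      rw [div_le_div_iff₀ (by positivity) (by positivity)]; nlinarith

theorem stmt_19 (f : lp (fun _ : ℕ => ℝ) 2 → ℝ)
    (g : lp (fun _ : ℕ => ℝ) 2 → lp (fun _ : ℕ => ℝ) 2)
    (T : lp (fun _ : ℕ => ℝ) 2 → lp (fun _ : ℕ => ℝ) 2)
    (hf : ∀ x : lp (fun _ : ℕ => ℝ) 2,
      f x = ∑' n : ℕ, ((n : ℝ) + 1) * (x n) ^ (2 * (n + 1)))
    (hg : ∀ (x : lp (fun _ : ℕ => ℝ) 2) (n : ℕ),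
      g x n = 2 * ((n : ℝ) + 1) ^ 2 * (x n) ^ (2 * (n + 1) - 1))
    (hT : ∀ x : lp (fun _ : ℕ => ℝ) 2,
      T x = if x = 0 then x else x - (f x / ‖g x‖ ^ 2) • g x)
    (s : ℕ → lp (fun _ : ℕ => ℝ) 2)
    (hs : ∀ n : ℕ, s n = lp.single 2 0 (1 : ℝ) + lp.single 2 (n + 1) (1 : ℝ)) :
    (∀ v : lp (fun _ : ℕ => ℝ) 2,
      Tendsto (fun n => ⟪s n, v⟫) atTop (𝓝 ⟪lp.single 2 0 (1 : ℝ), v⟫)) ∧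
    (∀ n : ℕ, f (s n) = (n : ℝ) + 3) ∧
    (∀ n : ℕ, ‖g (s n)‖ = Real.sqrt (4 + 4 * ((n : ℝ) + 2) ^ 4)) ∧
    Tendsto (fun n => s n - T (s n)) atTop (𝓝 0) ∧
    T (lp.single 2 0 (1 : ℝ)) ≠ lp.single 2 0 (1 : ℝ) ∧
    ¬ (∀ (u : ℕ → lp (fun _ : ℕ => ℝ) 2) (ybar : lp (fun _ : ℕ => ℝ) 2),
        (∀ v, Tendsto (fun n => ⟪u n, v⟫) atTop (𝓝 ⟪ybar, v⟫)) →
        Tendsto (fun n => u n - T (u n)) atTop (𝓝 0) →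
        T ybar = ybar) := by
  have hexp : ∀ k : ℕ, 2 * (k + 1) ≠ 0 := fun k => by omega
  have hexp' : ∀ k : ℕ, 2 * (k + 1) - 1 ≠ 0 := fun k => by omega
  have hweak : ∀ v, Tendsto (fun n => ⟪s n, v⟫) atTop (𝓝 ⟪lp.single 2 0 (1 : ℝ), v⟫) := by
    intro v
    have := (Nat.cofinite_eq_atTop ▸ lp.tendsto_inner_single_cofinite_zero v).comp
      (tendsto_add_atTop_nat 1)
    simpa [hs, inner_add_left] using tendsto_const_nhds.add this
  have hf₀ : f 0 = 0 := by simp [hf, hexp]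
  have hfs : ∀ n : ℕ, f (s n) = n + 3 := fun n => by
    rw [hf, hs, lp.tsum_mul_pow_single_add_single (by omega) _ hexp]
    push_cast; ring
  have hgn : ∀ n : ℕ, ‖g (s n)‖ = √(4 + 4 * ((n : ℝ) + 2) ^ 4) := fun n => by
    rw [lp.eq_smul_single_add_smul_single (Nat.succ_ne_zero n).symm _ hexp' (g (s n))
      fun k => by rw [hg, hs], lp.norm_smul_single_add_smul_single (Nat.succ_ne_zero n).symm]
    push_cast; ring_nf
  have hdiff : ∀ n, s n - T (s n) = (f (s n) / ‖g (s n)‖ ^ 2) • g (s n) := fun n => by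
    -- `f` vanishes at `0`, which rules out the `x = 0` branch of `T`.
    have hsn : s n ≠ 0 := fun h => by linarith [hfs n, h ▸ hf₀]
    rw [hT, if_neg hsn, sub_sub_cancel]
  have hstrong : Tendsto (fun n => s n - T (s n)) atTop (𝓝 0) := by
    have habs : ∀ n : ℕ, |(n : ℝ) + 3| = n + 3 := fun n => abs_of_nonneg (by positivity)
    rw [tendsto_zero_iff_norm_tendsto_zero]
    simp only [hdiff, norm_div_norm_sq_smul]
    simpa only [hfs, hgn, habs] using tendsto_add_three_div_sqrt_atTop_zero
  have hTe₀ : T (lp.single 2 0 (1 : ℝ)) ≠ lp.single 2 0 (1 : ℝ) := by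
    have hfe₀ : f (lp.single 2 0 (1 : ℝ)) = 1 := by
      rw [hf, lp.tsum_mul_pow_single _ hexp]; norm_num
    have he₀ : (lp.single 2 0 (1 : ℝ) : ℓ²(ℕ, ℝ)) ≠ 0 := fun h => by
      rw [h, hf₀] at hfe₀; exact zero_ne_one hfe₀
    have hge₀ : g (lp.single 2 0 (1 : ℝ)) ≠ 0 := fun h => by
      simpa [h] using hg (lp.single 2 0 (1 : ℝ)) 0
    rw [hT, if_neg he₀, Ne, sub_eq_self, hfe₀]
    exact smul_ne_zero (div_ne_zero one_ne_zero (by positivity)) hge₀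
  exact ⟨hweak, hfs, hgn, hstrong, hTe₀, fun H => hTe₀ (H s _ hweak hstrong)⟩
end
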